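/- arXiv:1505.01996 — 2 statements merged into one kernel-verified Lean document; each statement's English description precedes it below -/
import Mathlib

section
/- With the labeling λ of Π_{n,s+1}: if x ⋖ y is an edge with A(x) ≠ A(y) and λ(x ⋖ y) = (k,i,j), then the underlying partition of y is obtained from that of x by merging the part containing k with the part whose i-th label contains j. -/
open Finset

/-- A vector partition of `[n]` into `s+1` components: a partition `P` of `[n]`
together with `s` labelings of its parts. -/
structure VPart (n s : ℕ) where
  P : Finpartition (Finset.univ : Finset (Fin n))
  w : Fin s → Finset (Fin n) → Finset (Fin n)
  card_w : ∀ i : Fin s, ∀ B ∈ P.parts, (w i B).card = B.card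
  part_w : ∀ i : Fin s, ∀ x : Fin n, ∃! B, B ∈ P.parts ∧ x ∈ w i B
  w_junk : ∀ i B, B ∉ P.parts → w i B = ∅

namespace VPart

variable {n s : ℕ}

@[ext] theorem ext' {x y : VPart n s} (hP : x.P = y.P) (hw : x.w = y.w) : x = y := by
  cases x; cases y; simp_all

/-- componentwise union-refinement order -/
instance : PartialOrder (VPart n s) where
  le x y := x.P ≤ y.P ∧
    ∀ i : Fin s, ∀ B ∈ x.P.parts, ∀ B' ∈ y.P.parts, B ⊆ B' → x.w i B ⊆ y.w i B'
  le_refl x := by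
    refine ⟨le_refl _, fun i B hB B' hB' hBB' => ?_⟩
    obtain rfl : B = B' := by
      obtain ⟨a, ha⟩ := x.P.nonempty_of_mem_parts hB
      exact x.P.eq_of_mem_parts hB hB' ha (hBB' ha)
    exact subset_rfl
  le_trans x y z hxy hyz := by
    refine ⟨le_trans hxy.1 hyz.1, fun i B hB B'' hB'' hBB'' => ?_⟩
    obtain ⟨B', hB', hBB'⟩ := hxy.1 hB
    obtain ⟨B''', hB''', hB'B'''⟩ := hyz.1 hB'
    obtain ⟨a, ha⟩ := x.P.nonempty_of_mem_parts hB
    obtain rfl : B''' = B'' :=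
      z.P.eq_of_mem_parts hB''' hB'' (hB'B''' (hBB' ha)) (hBB'' ha)
    exact subset_trans (hxy.2 i B hB B' hB' hBB') (hyz.2 i B' hB' B''' hB''' hB'B''')
  le_antisymm x y hxy hyx := by
    have hP : x.P = y.P := le_antisymm hxy.1 hyx.1
    refine ext' hP ?_
    funext i B
    by_cases hB : B ∈ x.P.parts
    · exact subset_antisymm (hxy.2 i B hB B (hP ▸ hB) subset_rfl)
        (hyx.2 i B (hP ▸ hB) B hB subset_rfl)
    · rw [x.w_junk i B hB, y.w_junk i B (hP ▸ hB)]

/-- the part of the underlying partition containing `k` -/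
def partOf (x : VPart n s) (k : Fin n) : Finset (Fin n) := x.P.part k

/-- the atom word of `x`: `atomWord x i k` is the element of the `i`-th label of the
part containing `k` whose rank in that label matches the rank of `k` in its part. -/
def atomWord (x : VPart n s) (i : Fin s) (k : Fin n) : Fin n :=
  (((x.w i (x.partOf k)).sort (· ≤ ·)).getD (((x.partOf k).filter (· < k)).card)) k

/-- `x` is an atom: all parts of the underlying partition are singletons. -/
def IsAtomic (x : VPart n s) : Prop := ∀ B ∈ x.P.parts, B.card = 1

/-- strict lexicographic order on atom words, with `i` as the major index
and `k` the minor index. -/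
def wordLt (A B : Fin s → Fin n → Fin n) : Prop :=
  ∃ i k, A i k < B i k ∧
    ∀ i' k', (i' < i ∨ (i' = i ∧ k' < k)) → A i' k' = B i' k'

def wordLe (A B : Fin s → Fin n → Fin n) : Prop := wordLt A B ∨ A = B

end VPart

/-! A cover `x ⋖ y` merges exactly two parts `B₁ ∋ k`, `B₂` of `x`, and by counting, each label
of `B₁ ∪ B₂` in `y` is the union of the labels of `B₁` and `B₂` in `x`. The atom word sends `k`
to the element of the label with the same rank as `k` in its part. If the words of `x` and `y`
agree at every `k' < k` and `y`'s value at `k` lay in the label `L` of `B₁`, then the elements of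
`L` below it would be exactly the images of the `k' < k` in `B₁`, i.e. the elements of `L` below
`x`'s value, so the two values would coincide. -/

namespace Finset

variable {α : Type*} [LinearOrder α] {s t : Finset α} {a : α}

def rank (s : Finset α) (a : α) : ℕ := #{b ∈ s | b < a}

/-- The element of `t` whose rank in `t` is the rank of `a` in `s` (junk value `a` when `t` is
too small). -/
def rankMatch (s t : Finset α) (a : α) : α := (t.sort (· ≤ ·)).getD (s.rank a) a

theorem rank_orderEmbOfFin {k : ℕ} (h : #s = k) (r : Fin k) :
    s.rank (s.orderEmbOfFin h r) = r := by
  have hfilter :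
      {b ∈ s | b < s.orderEmbOfFin h r} = (Iio r).map (s.orderEmbOfFin h).toEmbedding := by
    ext b
    simp only [mem_filter, mem_map, mem_Iio, RelEmbedding.coe_toEmbedding]
    constructor
    · rintro ⟨hb, hlt⟩
      obtain ⟨r', rfl⟩ : b ∈ Set.range (s.orderEmbOfFin h) := by rwa [range_orderEmbOfFin]
      exact ⟨r', (s.orderEmbOfFin h).lt_iff_lt.1 hlt, rfl⟩
    · rintro ⟨r', hr', rfl⟩
      exact ⟨orderEmbOfFin_mem s h r', (s.orderEmbOfFin h).lt_iff_lt.2 hr'⟩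
  rw [rank, hfilter, card_map, Fin.card_Iio]

theorem exists_orderEmbOfFin_eq {k : ℕ} (h : #s = k) (ha : a ∈ s) :
    ∃ r, s.orderEmbOfFin h r = a := by
  rwa [← Set.mem_range, range_orderEmbOfFin]

theorem rankMatch_orderEmbOfFin (h : #t = #s) (r : Fin #s) :
    s.rankMatch t (s.orderEmbOfFin rfl r) = t.orderEmbOfFin h r := by
  rw [rankMatch, rank_orderEmbOfFin,
    List.getD_eq_getElem _ _ (by rw [length_sort, h]; exact r.2)]
  rfl

theorem mapsTo_rankMatch (h : #t = #s) : Set.MapsTo (s.rankMatch t) s t := by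
  intro a ha
  obtain ⟨r, rfl⟩ := exists_orderEmbOfFin_eq rfl ha
  rw [rankMatch_orderEmbOfFin h]
  exact orderEmbOfFin_mem t h r

theorem strictMonoOn_rankMatch (h : #t = #s) : StrictMonoOn (s.rankMatch t) s := by
  intro a ha b hb hab
  obtain ⟨r, rfl⟩ := exists_orderEmbOfFin_eq rfl ha
  obtain ⟨r', rfl⟩ := exists_orderEmbOfFin_eq rfl hb
  rw [rankMatch_orderEmbOfFin h, rankMatch_orderEmbOfFin h]
  exact (t.orderEmbOfFin h).lt_iff_lt.2 ((s.orderEmbOfFin rfl).lt_iff_lt.1 hab)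

theorem surjOn_rankMatch (h : #t = #s) : Set.SurjOn (s.rankMatch t) s t := by
  intro b hb
  obtain ⟨r, rfl⟩ := exists_orderEmbOfFin_eq h hb
  exact ⟨s.orderEmbOfFin rfl r, orderEmbOfFin_mem s rfl r, rankMatch_orderEmbOfFin h r⟩

theorem rankMatch_union_eq_of_mem_left [DecidableEq α] {s₁ s₂ t₁ t₂ : Finset α} {k : α}
    (hs : Disjoint s₁ s₂) (ht : Disjoint t₁ t₂) (h₁ : #t₁ = #s₁) (h₂ : #t₂ = #s₂) (hk : k ∈ s₁)
    (heq₁ : ∀ a ∈ s₁, a < k → (s₁ ∪ s₂).rankMatch (t₁ ∪ t₂) a = s₁.rankMatch t₁ a)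
    (heq₂ : ∀ a ∈ s₂, a < k → (s₁ ∪ s₂).rankMatch (t₁ ∪ t₂) a = s₂.rankMatch t₂ a)
    (hmem : (s₁ ∪ s₂).rankMatch (t₁ ∪ t₂) k ∈ t₁) :
    (s₁ ∪ s₂).rankMatch (t₁ ∪ t₂) k = s₁.rankMatch t₁ k := by
  have hcard : #(t₁ ∪ t₂) = #(s₁ ∪ s₂) := by
    rw [card_union_of_disjoint ht, card_union_of_disjoint hs, h₁, h₂]
  have hkC : k ∈ s₁ ∪ s₂ := mem_union_left _ hk
  have hf₁k : s₁.rankMatch t₁ k ∈ t₁ := mapsTo_rankMatch h₁ hk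
  -- Either strict inequality is refuted by pulling the smaller value back along the other
  -- matching: its preimage lies below `k`, where the two matchings agree.
  refine le_antisymm (not_lt.1 fun hlt => ?_) (not_lt.1 fun hlt => ?_)
  · obtain ⟨a, ha, hfa⟩ := surjOn_rankMatch hcard (mem_union_left _ hf₁k)
    have hak : a < k := ((strictMonoOn_rankMatch hcard).lt_iff_lt ha hkC).1 (hfa ▸ hlt)
    rcases mem_union.1 ha with ha₁ | ha₂
    · have := (strictMonoOn_rankMatch h₁) ha₁ hk hak
      rw [← heq₁ a ha₁ hak, hfa] at this
      exact lt_irrefl _ this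
    · have : s₁.rankMatch t₁ k ∈ t₂ := by
        rw [← hfa, heq₂ a ha₂ hak]
        exact mapsTo_rankMatch h₂ ha₂
      exact disjoint_left.1 ht hf₁k this
  · obtain ⟨a, ha, hfa⟩ := surjOn_rankMatch h₁ hmem
    have hak : a < k := ((strictMonoOn_rankMatch h₁).lt_iff_lt ha hk).1 (hfa ▸ hlt)
    have := (strictMonoOn_rankMatch hcard) (mem_union_left _ ha) hkC hak
    rw [heq₁ a ha hak, hfa] at this
    exact lt_irrefl _ this

end Finset

namespace Finpartition

section Lattice

variable {α : Type*} [DistribLattice α] [OrderBot α] [DecidableEq α] {a b₁ b₂ : α}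
  {P Q : Finpartition a}

def merge (P : Finpartition a) (h₁ : b₁ ∈ P.parts) (h₂ : b₂ ∈ P.parts) (hne : b₁ ≠ b₂) :
    Finpartition a where
  parts := insert (b₁ ⊔ b₂) ((P.parts.erase b₁).erase b₂)
  supIndep := by
    refine (P.supIndep.subset ((erase_subset _ _).trans (erase_subset _ _))).insert ?_
    refine Finset.disjoint_sup_right.2 fun c hc => ?_
    simp only [mem_erase] at hc
    exact disjoint_sup_left.2 ⟨P.disjoint h₁ hc.2.2 (Ne.symm hc.2.1),
      P.disjoint h₂ hc.2.2 (Ne.symm hc.1)⟩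
  sup_parts := by
    refine Eq.trans ?_ P.sup_parts
    conv_rhs => rw [← insert_erase h₁, ← insert_erase (mem_erase.2 ⟨hne.symm, h₂⟩)]
    simp only [sup_insert, id, sup_assoc]
  bot_notMem := by
    rw [mem_insert, not_or]
    exact ⟨fun h => P.ne_bot h₁ (sup_eq_bot_iff.1 h.symm).1,
      fun h => P.bot_notMem (mem_of_mem_erase (mem_of_mem_erase h))⟩

theorem le_merge (h₁ : b₁ ∈ P.parts) (h₂ : b₂ ∈ P.parts) (hne : b₁ ≠ b₂) :
    P ≤ P.merge h₁ h₂ hne := by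
  intro c hc
  by_cases hc₁ : c = b₁
  · exact ⟨b₁ ⊔ b₂, mem_insert_self _ _, hc₁ ▸ le_sup_left⟩
  by_cases hc₂ : c = b₂
  · exact ⟨b₁ ⊔ b₂, mem_insert_self _ _, hc₂ ▸ le_sup_right⟩
  exact ⟨c, mem_insert_of_mem (mem_erase.2 ⟨hc₂, mem_erase.2 ⟨hc₁, hc⟩⟩), le_rfl⟩

theorem merge_ne (h₁ : b₁ ∈ P.parts) (h₂ : b₂ ∈ P.parts) (hne : b₁ ≠ b₂) :
    P.merge h₁ h₂ hne ≠ P := by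
  intro h
  have hb₁ : b₁ ∈ (P.merge h₁ h₂ hne).parts := by rw [h]; exact h₁
  simp only [merge, mem_insert, mem_erase, ne_eq, not_true_eq_false, false_and, and_false,
    or_false] at hb₁
  have hdisj : Disjoint b₁ b₂ := P.disjoint h₁ h₂ hne
  rw [left_eq_sup] at hb₁
  exact P.ne_bot h₂ (hdisj.symm.eq_bot_of_le hb₁)

theorem merge_le (hPQ : P ≤ Q) (h₁ : b₁ ∈ P.parts) (h₂ : b₂ ∈ P.parts) (hne : b₁ ≠ b₂)
    {c : α} (hc : c ∈ Q.parts) (hle : b₁ ⊔ b₂ ≤ c) : P.merge h₁ h₂ hne ≤ Q := by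
  intro d hd
  rcases mem_insert.1 hd with rfl | hd
  · exact ⟨c, hc, hle⟩
  · exact hPQ (mem_of_mem_erase (mem_of_mem_erase hd))

end Lattice

section Finset

variable {α : Type*} [DecidableEq α] {s B C : Finset α} {P Q : Finpartition s}

theorem subset_of_le (hPQ : P ≤ Q) (hB : B ∈ P.parts) (hC : C ∈ Q.parts) {a : α}
    (haB : a ∈ B) (haC : a ∈ C) : B ⊆ C := by
  obtain ⟨C', hC', hBC'⟩ := hPQ hB
  rwa [Q.eq_of_mem_parts hC' hC (hBC' haB) haC] at hBC'

theorem biUnion_filter_subset_of_le (hPQ : P ≤ Q) (hC : C ∈ Q.parts) :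
    {B ∈ P.parts | B ⊆ C}.biUnion id = C := by
  refine Subset.antisymm (fun a ha => ?_) (fun c hc => ?_)
  · obtain ⟨B, hB, haB⟩ := mem_biUnion.1 ha
    exact (mem_filter.1 hB).2 haB
  · have hcs : c ∈ s := Q.subset hC hc
    exact mem_biUnion.2 ⟨P.part c, mem_filter.2 ⟨P.part_mem.2 hcs,
      subset_of_le hPQ (P.part_mem.2 hcs) hC (P.mem_part hcs) hc⟩, P.mem_part hcs⟩

theorem exists_subset_of_lt (hPQ : P < Q) :
    ∃ B₁ ∈ P.parts, ∃ B₂ ∈ P.parts, B₁ ≠ B₂ ∧ ∃ C ∈ Q.parts, B₁ ∪ B₂ ⊆ C := by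
  by_contra! h
  refine hPQ.not_ge fun C hC => ?_
  obtain ⟨c, hc⟩ := Q.nonempty_of_mem_parts hC
  have hpart : ∀ a ∈ C, P.part a ⊆ C := fun a ha =>
    subset_of_le hPQ.le (P.part_mem.2 (Q.subset hC ha)) hC (P.mem_part (Q.subset hC ha)) ha
  refine ⟨P.part c, P.part_mem.2 (Q.subset hC hc), fun d hd => ?_⟩
  by_cases hdc : P.part d = P.part c
  · exact hdc ▸ P.mem_part (Q.subset hC hd)
  · exact absurd (union_subset (hpart d hd) (hpart c hc))
      (h _ (P.part_mem.2 (Q.subset hC hd)) _ (P.part_mem.2 (Q.subset hC hc)) hdc C hC)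

end Finset

end Finpartition

namespace VPart

variable {n s : ℕ} {x y : VPart n s} {i : Fin s} {k : Fin n} {B B₁ B₂ C : Finset (Fin n)}

theorem w_disjoint (hB₁ : B₁ ∈ x.P.parts) (hB₂ : B₂ ∈ x.P.parts) (hne : B₁ ≠ B₂) :
    Disjoint (x.w i B₁) (x.w i B₂) := by
  refine disjoint_left.2 fun a ha₁ ha₂ => hne ?_
  obtain ⟨D, -, huniq⟩ := x.part_w i a
  exact (huniq B₁ ⟨hB₁, ha₁⟩).trans (huniq B₂ ⟨hB₂, ha₂⟩).symm

theorem atomWord_eq_rankMatch (x : VPart n s) (i : Fin s) (hB : B ∈ x.P.parts) (hk : k ∈ B) :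
    atomWord x i k = B.rankMatch (x.w i B) k := by
  rw [← x.P.part_eq_of_mem hB hk]
  rfl

theorem atomWord_mem (x : VPart n s) (i : Fin s) (hB : B ∈ x.P.parts) (hk : k ∈ B) :
    atomWord x i k ∈ x.w i B := by
  rw [atomWord_eq_rankMatch x i hB hk]
  exact mapsTo_rankMatch (x.card_w i B hB) hk

theorem card_biUnion_w {Q : Finpartition (univ : Finset (Fin n))} (hQ : x.P ≤ Q)
    (hC : C ∈ Q.parts) : #({B ∈ x.P.parts | B ⊆ C}.biUnion (x.w i)) = #C := by
  have hparts : ∀ B ∈ {B ∈ x.P.parts | B ⊆ C}, B ∈ x.P.parts :=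
    fun B hB => (mem_filter.1 hB).1
  calc #({B ∈ x.P.parts | B ⊆ C}.biUnion (x.w i))
      = ∑ B ∈ {B ∈ x.P.parts | B ⊆ C}, #(x.w i B) :=
        card_biUnion fun B hB B' hB' hne => w_disjoint (hparts B hB) (hparts B' hB') hne
    _ = ∑ B ∈ {B ∈ x.P.parts | B ⊆ C}, #(id B) :=
        sum_congr rfl fun B hB => x.card_w i B (hparts B hB)
    _ = #({B ∈ x.P.parts | B ⊆ C}.biUnion id) :=
        (card_biUnion fun B hB B' hB' hne => x.P.disjoint (hparts B hB) (hparts B' hB') hne).symm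
    _ = #C := by rw [Finpartition.biUnion_filter_subset_of_le hQ hC]

def lift (x : VPart n s) (Q : Finpartition (univ : Finset (Fin n))) (hQ : x.P ≤ Q) :
    VPart n s where
  P := Q
  w i D := if D ∈ Q.parts then {B ∈ x.P.parts | B ⊆ D}.biUnion (x.w i) else ∅
  card_w i D hD := by rw [if_pos hD, card_biUnion_w hQ hD]
  part_w i a := by
    obtain ⟨B, ⟨hB, haB⟩, huniq⟩ := x.part_w i a
    obtain ⟨D, hD, hBD⟩ := hQ hB
    refine ⟨D, ⟨hD, ?_⟩, fun D' ⟨hD', haD'⟩ => ?_⟩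
    · rw [if_pos hD]
      exact mem_biUnion.2 ⟨B, mem_filter.2 ⟨hB, hBD⟩, haB⟩
    · rw [if_pos hD'] at haD'
      obtain ⟨B', hB', haB'⟩ := mem_biUnion.1 haD'
      obtain ⟨hB'x, hB'D'⟩ := mem_filter.1 hB'
      obtain rfl := huniq B' ⟨hB'x, haB'⟩
      obtain ⟨b, hb⟩ := x.P.nonempty_of_mem_parts hB
      exact Q.eq_of_mem_parts hD' hD (hB'D' hb) (hBD hb)
  w_junk i D hD := if_neg hD

theorem le_lift (x : VPart n s) (Q : Finpartition (univ : Finset (Fin n))) (hQ : x.P ≤ Q) :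
    x ≤ lift x Q hQ := by
  refine ⟨hQ, fun i B hB D hD hBD => ?_⟩
  change x.w i B ⊆ if D ∈ Q.parts then _ else _
  rw [if_pos (show D ∈ Q.parts from hD)]
  exact subset_biUnion_of_mem (x.w i) (mem_filter.2 ⟨hB, hBD⟩)

theorem lift_le (hxy : x ≤ y) (Q : Finpartition (univ : Finset (Fin n))) (hQ : x.P ≤ Q)
    (hQy : Q ≤ y.P) : lift x Q hQ ≤ y := by
  refine ⟨hQy, fun i D hD C hC hDC => ?_⟩
  change (if D ∈ Q.parts then _ else _) ⊆ y.w i C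
  rw [if_pos (show D ∈ Q.parts from hD)]
  refine biUnion_subset.2 fun B hB => ?_
  obtain ⟨hBx, hBD⟩ := mem_filter.1 hB
  exact hxy.2 i B hBx C hC (hBD.trans hDC)

/-- Labels only grow along `≤`, and have the size of their part, so they are forced. -/
theorem w_eq_of_mem_parts (hxy : x ≤ y) (hx : B ∈ x.P.parts) (hy : B ∈ y.P.parts) :
    y.w i B = x.w i B :=
  (eq_of_subset_of_card_le (hxy.2 i B hx B hy subset_rfl)
    (by rw [x.card_w i B hx, y.card_w i B hy])).symm

theorem w_union_eq (hxy : x ≤ y) (hB₁ : B₁ ∈ x.P.parts) (hB₂ : B₂ ∈ x.P.parts) (hne : B₁ ≠ B₂)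
    (hC : B₁ ∪ B₂ ∈ y.P.parts) : y.w i (B₁ ∪ B₂) = x.w i B₁ ∪ x.w i B₂ := by
  have hdisj : Disjoint B₁ B₂ := x.P.disjoint hB₁ hB₂ hne
  refine (eq_of_subset_of_card_le (union_subset (hxy.2 i B₁ hB₁ _ hC subset_union_left)
    (hxy.2 i B₂ hB₂ _ hC subset_union_right)) ?_).symm
  rw [y.card_w i _ hC, card_union_of_disjoint (w_disjoint hB₁ hB₂ hne), x.card_w i B₁ hB₁,
    x.card_w i B₂ hB₂, card_union_of_disjoint hdisj]

theorem eq_of_le_of_P_eq (hxy : x ≤ y) (hP : x.P = y.P) : x = y := by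
  refine ext' hP (funext₂ fun i B => ?_)
  by_cases hB : B ∈ x.P.parts
  · exact (w_eq_of_mem_parts hxy hB (hP ▸ hB)).symm
  · rw [x.w_junk i B hB, y.w_junk i B (hP ▸ hB)]

theorem P_lt_P_of_lt (hxy : x < y) : x.P < y.P :=
  lt_of_le_of_ne hxy.le.1 fun hP => hxy.ne (eq_of_le_of_P_eq hxy.le hP)

/-- Lifting `x` to the merge of two of its parts lying in a common part of `y` gives an element
between `x` and `y`, hence `y` itself. -/
theorem exists_parts_eq_merge_of_covBy (hxy : x ⋖ y) :
    ∃ B₁ B₂ : Finset (Fin n), B₁ ∈ x.P.parts ∧ B₂ ∈ x.P.parts ∧ B₁ ≠ B₂ ∧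
      y.P.parts = insert (B₁ ∪ B₂) ((x.P.parts.erase B₁).erase B₂) := by
  obtain ⟨B₁, hB₁, B₂, hB₂, hne, C, hC, hsub⟩ :=
    Finpartition.exists_subset_of_lt (P_lt_P_of_lt hxy.lt)
  have hxM := Finpartition.le_merge hB₁ hB₂ hne
  have hMy := Finpartition.merge_le hxy.le.1 hB₁ hB₂ hne hC hsub
  refine ⟨B₁, B₂, hB₁, hB₂, hne, ?_⟩
  rcases hxy.eq_or_eq (le_lift x _ hxM) (lift_le hxy.le _ hxM hMy) with h | h
  · exact absurd (congrArg VPart.P h) (Finpartition.merge_ne hB₁ hB₂ hne)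
  · rw [← h]
    rfl

theorem atomWord_eq_of_part_mem (hxy : x ≤ y) (i : Fin s) (h : y.partOf k ∈ x.P.parts) :
    atomWord x i k = atomWord y i k := by
  have hk : k ∈ y.partOf k := y.P.mem_part (mem_univ k)
  have hy : y.partOf k ∈ y.P.parts := y.P.part_mem.2 (mem_univ k)
  rw [atomWord_eq_rankMatch x i h hk, atomWord_eq_rankMatch y i hy hk,
    w_eq_of_mem_parts hxy h hy]

theorem atomWord_mem_w_right (hxy : x ≤ y) (hB₁ : B₁ ∈ x.P.parts) (hB₂ : B₂ ∈ x.P.parts)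
    (hne : B₁ ≠ B₂) (hC : B₁ ∪ B₂ ∈ y.P.parts) (hk : k ∈ B₁)
    (hmin : ∀ k' < k, atomWord x i k' = atomWord y i k')
    (hne_at : atomWord x i k ≠ atomWord y i k) : atomWord y i k ∈ x.w i B₂ := by
  have hw := w_union_eq (i := i) hxy hB₁ hB₂ hne hC
  have hy : ∀ a ∈ B₁ ∪ B₂,
      atomWord y i a = (B₁ ∪ B₂).rankMatch (x.w i B₁ ∪ x.w i B₂) a := fun a ha => by
    rw [atomWord_eq_rankMatch y i hC ha, hw]
  have hagree : ∀ B ∈ x.P.parts, B ⊆ B₁ ∪ B₂ → ∀ a ∈ B, a < k →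
      (B₁ ∪ B₂).rankMatch (x.w i B₁ ∪ x.w i B₂) a = B.rankMatch (x.w i B) a :=
    fun B hB hBC a ha hak => by
      rw [← hy a (hBC ha), ← hmin a hak, atomWord_eq_rankMatch x i hB ha]
  by_contra hk₂
  have hk₁ : atomWord y i k ∈ x.w i B₁ := by
    have := atomWord_mem y i hC (mem_union_left _ hk)
    rw [hw] at this
    exact (mem_union.1 this).resolve_right hk₂
  refine hne_at ?_
  rw [atomWord_eq_rankMatch x i hB₁ hk, hy k (mem_union_left _ hk)]
  exact (rankMatch_union_eq_of_mem_left (x.P.disjoint hB₁ hB₂ hne) (w_disjoint hB₁ hB₂ hne)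
    (x.card_w i B₁ hB₁) (x.card_w i B₂ hB₂) hk (hagree B₁ hB₁ subset_union_left)
    (hagree B₂ hB₂ subset_union_right) (hy k (mem_union_left _ hk) ▸ hk₁)).symm

end VPart

open VPart in
theorem statement11_general (n s : ℕ) (x y : VPart n s) (hxy : x ⋖ y)
    (p : Fin n × Fin s)
    (hp : atomWord x p.2 p.1 ≠ atomWord y p.2 p.1)
    (hmin : ∀ q : Fin n × Fin s, (q.1 < p.1 ∨ (q.1 = p.1 ∧ q.2 < p.2)) ->
      atomWord x q.2 q.1 = atomWord y q.2 q.1) :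
    ∃ B₁ B₂ : Finset (Fin n), B₁ ∈ x.P.parts ∧ B₂ ∈ x.P.parts ∧ B₁ ≠ B₂ ∧
      p.1 ∈ B₁ ∧ atomWord y p.2 p.1 ∈ x.w p.2 B₂ ∧
      y.P.parts = insert (B₁ ∪ B₂) ((x.P.parts.erase B₁).erase B₂) := by
  obtain ⟨B₁, B₂, hB₁, hB₂, hne, hparts⟩ := exists_parts_eq_merge_of_covBy hxy
  have hC : B₁ ∪ B₂ ∈ y.P.parts := hparts ▸ mem_insert_self _ _
  have hmin' : ∀ k < p.1, atomWord x p.2 k = atomWord y p.2 k :=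
    fun k hk => hmin (k, p.2) (Or.inl hk)
  have hk : p.1 ∈ B₁ ∪ B₂ := by
    by_contra hk
    refine hp (atomWord_eq_of_part_mem hxy.le p.2 ?_)
    have hD : y.partOf p.1 ∈ y.P.parts := y.P.part_mem.2 (mem_univ p.1)
    rw [hparts, mem_insert] at hD
    rcases hD with hD | hD
    · exact absurd (hD ▸ y.P.mem_part (mem_univ p.1)) hk
    · exact mem_of_mem_erase (mem_of_mem_erase hD)
  rcases mem_union.1 hk with hk | hk
  · exact ⟨B₁, B₂, hB₁, hB₂, hne, hk,
      atomWord_mem_w_right hxy.le hB₁ hB₂ hne hC hk hmin' hp, hparts⟩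
  · refine ⟨B₂, B₁, hB₂, hB₁, hne.symm, hk,
      atomWord_mem_w_right hxy.le hB₂ hB₁ hne.symm (union_comm B₁ B₂ ▸ hC) hk hmin' hp, ?_⟩
    rw [hparts, union_comm, erase_right_comm]

open VPart in
/-- if `x ⋖ y` is an edge with `A(x) ≠ A(y)` and label `(k, i, j)`
(here `p = (k, i)` and `j = atomWord y p.2 p.1`), then the underlying partition of `y`
is obtained from that of `x` by merging the part containing `k` with the part whose
`i`-th label contains `j`. -/
theorem statement11 (n s : ℕ) (x y : VPart n s) (hxy : x ⋖ y)
    (hA : atomWord x ≠ atomWord y) (p : Fin n × Fin s)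
    (hp : atomWord x p.2 p.1 ≠ atomWord y p.2 p.1)
    (hmin : ∀ q : Fin n × Fin s, (q.1 < p.1 ∨ (q.1 = p.1 ∧ q.2 < p.2)) ->
      atomWord x q.2 q.1 = atomWord y q.2 q.1) :
    ∃ B₁ B₂ : Finset (Fin n), B₁ ∈ x.P.parts ∧ B₂ ∈ x.P.parts ∧ B₁ ≠ B₂ ∧
      p.1 ∈ B₁ ∧ atomWord y p.2 p.1 ∈ x.w p.2 B₂ ∧
      y.P.parts = insert (B₁ ∪ B₂) ((x.P.parts.erase B₁).erase B₂) :=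
  statement11_general n s x y hxy p hp hmin
end

section
/- In the partition lattice Π_n with the Wachs labeling χ(x ⋖ y) = max(B₁ ∪ B₂) (where B₁, B₂ are the merged parts), every maximal chain from 0̂ to 1̂ has label multiset contained in {2, 3, ..., n}, and the unique strictly increasing maximal chain is the one with label word 2, 3, ..., n obtained by successively merging {1,...,k−1}'s block with {k} for k = 2, ..., n. -/
/-!
A cover `x ⋖ y` creates a block that is not a block of `x`, so it has at least two elements and
its label is at least `2`; no label exceeds `n`. Hence a strictly increasing word of `n - 1`
labels is forced to be `2, 3, …, n`.

Refining strictly increases the number of blocks. The partition with one block `S` and singletons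
elsewhere has `n - #S + 1` blocks, so enlarging `S` by one element is a cover, which gives the
chain of initial segments. Conversely, if the `k`-th step of a chain starts at `{0, …, k}` and has
label `k + 2`, the new blocks lie inside `{0, …, k + 1}`, so the next partition lies below the next
partition of the standard chain and by the covering property equals it.
-/

/-- The Wachs labeling of the partition lattice: the label of a cover `x ⋖ y`,
where `y` is obtained from `x` by merging parts `B₁` and `B₂`, is
`max (B₁ ∪ B₂)` (1-based). -/
def chi {n : ℕ} (x y : Finpartition (Finset.univ : Finset (Fin n))) : ℕ :=
  (y.parts \ x.parts).sup fun B => B.sup fun a => (a : ℕ) + 1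

open Finset

namespace Finpartition

section Refinement

variable {α : Type*} [DecidableEq α] {s : Finset α} {P Q : Finpartition s}

theorem le_of_le_of_card_parts_eq (h : P ≤ Q) (hcard : #Q.parts = #P.parts) : Q ≤ P := by
  -- Sending each block of `P` to the block of `Q` containing it is onto, hence injective here.
  choose f hfQ hf using h
  have hmem : ∀ {B} (hB : B ∈ Q.parts) {p} (hp : p ∈ P.parts) {x}, x ∈ B → x ∈ p → f hp = B :=
    fun hB _ hp _ hxB hxp => Q.eq_of_mem_parts (hfQ hp) hB (hf hp hxp) hxB
  have hsurj : ∀ B ∈ Q.parts, ∃ p, ∃ hp : p ∈ P.parts, f hp = B := fun B hB => by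
    obtain ⟨x, hx⟩ := Q.nonempty_of_mem_parts hB
    obtain ⟨p, hp, hxp⟩ := P.exists_mem (Q.le hB hx)
    exact ⟨p, hp, hmem hB hp hx hxp⟩
  have hinj := inj_on_of_surj_on_of_card_le (fun _ hp => f hp) (fun _ hp => hfQ hp) hsurj hcard.ge
  intro B hB
  obtain ⟨x, hx⟩ := Q.nonempty_of_mem_parts hB
  obtain ⟨p, hp, hxp⟩ := P.exists_mem (Q.le hB hx)
  refine ⟨p, hp, fun y hy => ?_⟩
  obtain ⟨p', hp', hyp'⟩ := P.exists_mem (Q.le hB hy)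
  rwa [← hinj hp hp' ((hmem hB hp hx hxp).trans (hmem hB hp' hy hyp').symm)] at hyp'

theorem card_parts_lt_of_lt (h : P < Q) : #Q.parts < #P.parts :=
  (card_mono h.le).lt_of_ne fun hcard => h.not_ge (le_of_le_of_card_parts_eq h.le hcard)

theorem one_lt_card_of_mem_parts_sdiff (h : P ≤ Q) {B : Finset α} (hB : B ∈ Q.parts \ P.parts) :
    1 < #B := by
  rw [mem_sdiff] at hB
  obtain ⟨x, hx⟩ := Q.nonempty_of_mem_parts hB.1
  obtain ⟨p, hp, hxp⟩ := P.exists_mem (Q.le hB.1 hx)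
  obtain ⟨C, hC, hpC⟩ := h hp
  have hpB : p ⊆ B := Q.eq_of_mem_parts hC hB.1 (hpC hxp) hx ▸ hpC
  obtain ⟨y, hyB, hyp⟩ := exists_of_ssubset (hpB.ssubset_of_ne fun e => hB.2 (e ▸ hp))
  exact one_lt_card.2 ⟨x, hx, y, hyB, fun e => hyp (e ▸ hxp)⟩

end Refinement

section OfBlock

variable {α : Type*} [Fintype α] [DecidableEq α] {S T : Finset α}

def ofBlock (S : Finset α) (hS : S.Nonempty) : Finpartition (univ : Finset α) :=
  (⊥ : Finpartition Sᶜ).extend hS.ne_empty disjoint_compl_left compl_sup_eq_top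

theorem mem_ofBlock_parts {hS : S.Nonempty} {B : Finset α} :
    B ∈ (ofBlock S hS).parts ↔ B = S ∨ ∃ a ∉ S, {a} = B := by
  simp [ofBlock]

theorem card_ofBlock_parts (hS : S.Nonempty) :
    #(ofBlock S hS).parts = Fintype.card α - #S + 1 := by
  rw [ofBlock, card_extend, card_bot, card_compl]

theorem ofBlock_mono {hS : S.Nonempty} {hT : T.Nonempty} (hST : S ⊆ T) :
    ofBlock S hS ≤ ofBlock T hT := by
  intro B hB
  rcases mem_ofBlock_parts.1 hB with rfl | ⟨a, -, rfl⟩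
  · exact ⟨T, mem_ofBlock_parts.2 (Or.inl rfl), hST⟩
  · by_cases haT : a ∈ T
    · exact ⟨T, mem_ofBlock_parts.2 (Or.inl rfl), singleton_subset_iff.2 haT⟩
    · exact ⟨{a}, mem_ofBlock_parts.2 (Or.inr ⟨a, haT, rfl⟩), le_rfl⟩

theorem ofBlock_covBy {hS : S.Nonempty} {hT : T.Nonempty} (hST : S ⊆ T) (hcard : #T = #S + 1) :
    ofBlock S hS ⋖ ofBlock T hT := by
  have hcard' : #(ofBlock S hS).parts = #(ofBlock T hT).parts + 1 := by
    rw [card_ofBlock_parts, card_ofBlock_parts]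
    have := card_le_univ T
    omega
  refine ⟨(ofBlock_mono hST).lt_of_ne fun e => by rw [e] at hcard'; omega, fun z hSz hzT => ?_⟩
  have := card_parts_lt_of_lt hSz
  have := card_parts_lt_of_lt hzT
  omega

theorem ofBlock_parts_sdiff {hS : S.Nonempty} {hT : T.Nonempty} (hST : S ⊂ T) :
    (ofBlock T hT).parts \ (ofBlock S hS).parts = {T} := by
  ext B
  simp only [mem_sdiff, mem_ofBlock_parts, mem_singleton]
  constructor
  · rintro ⟨rfl | ⟨a, haT, rfl⟩, hB⟩
    · rfl
    · exact absurd (Or.inr ⟨a, fun haS => haT (hST.subset haS), rfl⟩) hB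
  · rintro rfl
    refine ⟨Or.inl rfl, ?_⟩
    rintro (hTS | ⟨a, haS, haT⟩)
    · exact hST.ne hTS.symm
    · obtain ⟨b, hb⟩ := hS
      have : b ∈ ({a} : Finset α) := haT ▸ hST.subset hb
      exact haS (mem_singleton.1 this ▸ hb)

theorem ofBlock_eq_bot {hS : S.Nonempty} {a : α} (h : S = {a}) : ofBlock S hS = ⊥ :=
  le_bot_iff.1 fun B hB => by
    refine ⟨B, mem_bot_iff.2 ?_, le_rfl⟩
    rcases mem_ofBlock_parts.1 hB with rfl | ⟨b, -, rfl⟩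
    · exact ⟨a, mem_univ a, h.symm⟩
    · exact ⟨b, mem_univ b, rfl⟩

theorem ofBlock_eq_top {hS : S.Nonempty} (h : S = univ) : ofBlock S hS = ⊤ :=
  top_le_iff.1 fun B _ => ⟨S, mem_ofBlock_parts.2 (Or.inl rfl), h ▸ subset_univ B⟩

end OfBlock

end Finpartition

theorem eq_add_of_strictMonoOn_Iio {f : ℕ → ℕ} {a N : ℕ} (hf : StrictMonoOn f (Set.Iio N))
    (hfirst : a ≤ f 0) (hlast : f (N - 1) < a + N) {k : ℕ} (hk : k < N) : f k = a + k := by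
  have hgap : ∀ j < N, ∀ i ≤ j, f i + (j - i) ≤ f j := by
    intro j
    induction j with
    | zero => intro _ i hi; simp [Nat.le_zero.1 hi]
    | succ j ih =>
      intro hj i hi
      rcases hi.eq_or_lt with rfl | hi
      · simp
      · have := ih (by omega) i (by omega)
        have := hf (Set.mem_Iio.2 (by omega : j < N)) (Set.mem_Iio.2 hj) (Nat.lt_succ_self j)
        omega
  have := hgap k hk 0 k.zero_le
  have := hgap (N - 1) (by omega) k (by omega)
  omega

theorem chi_le {n : ℕ} (x y : Finpartition (univ : Finset (Fin n))) : chi x y ≤ n :=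
  Finset.sup_le fun _ _ => Finset.sup_le fun a _ => a.isLt

theorem two_le_chi_of_lt {n : ℕ} {x y : Finpartition (univ : Finset (Fin n))} (h : x < y) :
    2 ≤ chi x y := by
  obtain ⟨B, hB⟩ : (y.parts \ x.parts).Nonempty :=
    sdiff_nonempty.2 fun hyx => h.not_ge fun B hB => ⟨B, hyx hB, le_rfl⟩
  obtain ⟨u, hu, v, hv, huv⟩ := one_lt_card.1 (Finpartition.one_lt_card_of_mem_parts_sdiff h.le hB)
  have hu' := le_sup (f := fun a : Fin n => (a : ℕ) + 1) hu
  have hv' := le_sup (f := fun a : Fin n => (a : ℕ) + 1) hv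
  have : 1 ≤ (u : ℕ) ∨ 1 ≤ (v : ℕ) := by
    by_contra! h
    exact huv (Fin.ext (by omega))
  have : 2 ≤ B.sup fun a : Fin n => (a : ℕ) + 1 := by omega
  exact this.trans (le_sup (f := fun B : Finset (Fin n) => B.sup fun a => (a : ℕ) + 1) hB)

section StandardChain

variable {n m k : ℕ}

def lowerBlock (n m : ℕ) : Finset (Fin n) := univ.filter fun a => (a : ℕ) ≤ m

theorem mem_lowerBlock {a : Fin n} : a ∈ lowerBlock n m ↔ (a : ℕ) ≤ m := by
  simp [lowerBlock]

theorem lowerBlock_nonempty (hn : 0 < n) : (lowerBlock n m).Nonempty :=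
  ⟨⟨0, hn⟩, mem_lowerBlock.2 (Nat.zero_le m)⟩

theorem lowerBlock_eq_Iic (hm : m < n) : lowerBlock n m = Iic ⟨m, hm⟩ := by
  ext
  simp [mem_lowerBlock, Fin.le_def]

theorem lowerBlock_zero (hn : 0 < n) : lowerBlock n 0 = {⟨0, hn⟩} := by
  ext a
  simp [mem_lowerBlock, Fin.ext_iff]

theorem lowerBlock_sub_one : lowerBlock n (n - 1) = univ :=
  eq_univ_of_forall fun a => mem_lowerBlock.2 (by omega)

theorem lowerBlock_ssubset_succ (hk : k + 1 < n) : lowerBlock n k ⊂ lowerBlock n (k + 1) := by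
  rw [lowerBlock_eq_Iic (by omega), lowerBlock_eq_Iic hk]
  exact Iic_ssubset_Iic.2 (Fin.mk_lt_mk.2 (Nat.lt_succ_self k))

theorem card_lowerBlock (hm : m < n) : #(lowerBlock n m) = m + 1 := by
  rw [lowerBlock_eq_Iic hm, Fin.card_Iic]

theorem sup_lowerBlock (hm : m < n) : (lowerBlock n m).sup (fun a => (a : ℕ) + 1) = m + 1 :=
  le_antisymm (Finset.sup_le fun _ ha => Nat.succ_le_succ (mem_lowerBlock.1 ha))
    (le_sup (f := fun a : Fin n => (a : ℕ) + 1) (mem_lowerBlock.2 (le_refl m) : ⟨m, hm⟩ ∈ _))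

theorem subset_lowerBlock_of_sup_le {B : Finset (Fin n)}
    (h : B.sup (fun a => (a : ℕ) + 1) ≤ m + 1) : B ⊆ lowerBlock n m := fun _ ha =>
  mem_lowerBlock.2 <| Nat.le_of_succ_le_succ <|
    (le_sup (f := fun a : Fin n => (a : ℕ) + 1) ha).trans h

/-- Elements are 0-based: the block `{0, …, m}` is the paper's `{1, …, m + 1}`. -/
def standardChain (n : ℕ) (hn : 0 < n) (m : ℕ) : Finpartition (univ : Finset (Fin n)) :=
  Finpartition.ofBlock (lowerBlock n m) (lowerBlock_nonempty hn)

theorem mem_standardChain_parts {hn : 0 < n} {B : Finset (Fin n)} :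
    B ∈ (standardChain n hn m).parts ↔ B = lowerBlock n m ∨ ∃ a : Fin n, m < a ∧ B = {a} := by
  simp [standardChain, Finpartition.mem_ofBlock_parts, mem_lowerBlock, eq_comm]

theorem standardChain_zero (hn : 0 < n) : standardChain n hn 0 = ⊥ :=
  Finpartition.ofBlock_eq_bot (lowerBlock_zero hn)

theorem standardChain_sub_one (hn : 0 < n) : standardChain n hn (n - 1) = ⊤ :=
  Finpartition.ofBlock_eq_top lowerBlock_sub_one

theorem standardChain_covBy {hn : 0 < n} (hk : k + 1 < n) :
    standardChain n hn k ⋖ standardChain n hn (k + 1) :=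
  Finpartition.ofBlock_covBy (lowerBlock_ssubset_succ hk).subset
    (by rw [card_lowerBlock hk, card_lowerBlock (by omega)])

theorem chi_standardChain {hn : 0 < n} (hk : k + 1 < n) :
    chi (standardChain n hn k) (standardChain n hn (k + 1)) = k + 2 := by
  rw [chi, standardChain, standardChain,
    Finpartition.ofBlock_parts_sdiff (lowerBlock_ssubset_succ hk), sup_singleton, sup_lowerBlock hk]

theorem eq_standardChain_succ_of_covBy {hn : 0 < n} (hk : k + 1 < n)
    {z : Finpartition (univ : Finset (Fin n))} (hcov : standardChain n hn k ⋖ z)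
    (hchi : chi (standardChain n hn k) z ≤ k + 2) : z = standardChain n hn (k + 1) := by
  have hstd := standardChain_covBy (hn := hn) hk
  have hz : z ≤ standardChain n hn (k + 1) := by
    intro B hB
    by_cases hBk : B ∈ (standardChain n hn k).parts
    · exact hstd.le hBk
    · refine ⟨lowerBlock n (k + 1), mem_standardChain_parts.2 (Or.inl rfl),
        subset_lowerBlock_of_sup_le ?_⟩
      exact (le_sup (f := fun B : Finset (Fin n) => B.sup fun a => (a : ℕ) + 1)
        (mem_sdiff.2 ⟨hB, hBk⟩)).trans hchi
  exact (hstd.eq_or_eq hcov.le hz).resolve_left hcov.ne'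

end StandardChain

open Finset in
/-- with the Wachs labeling of the partition lattice `Π_n`, every
maximal chain from `⊥` to `⊤` has all labels in `{2, ..., n}`, and the unique
strictly increasing maximal chain has label word `2, 3, ..., n` and is obtained by
successively merging the block `{1, ..., k-1}` with `{k}`. -/
theorem statement19 (n : ℕ) (hn : 1 ≤ n) :
    (∀ c : ℕ -> Finpartition (Finset.univ : Finset (Fin n)),
      c 0 = ⊥ -> c (n - 1) = ⊤ -> (∀ k, k < n - 1 -> c k ⋖ c (k + 1)) ->
      ∀ k, k < n - 1 -> chi (c k) (c (k + 1)) ∈ Finset.Icc 2 n) ∧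
    ∃ c : ℕ -> Finpartition (Finset.univ : Finset (Fin n)),
      c 0 = ⊥ ∧ c (n - 1) = ⊤ ∧ (∀ k, k < n - 1 -> c k ⋖ c (k + 1)) ∧
      (∀ k, k < n - 1 -> chi (c k) (c (k + 1)) = k + 2) ∧
      (∀ m, m < n -> ∀ B ∈ (c m).parts,
        B = Finset.univ.filter (fun a : Fin n => (a : ℕ) ≤ m) ∨
          ∃ a : Fin n, m < (a : ℕ) ∧ B = {a}) ∧
      ∀ c' : ℕ -> Finpartition (Finset.univ : Finset (Fin n)),
        c' 0 = ⊥ -> c' (n - 1) = ⊤ -> (∀ k, k < n - 1 -> c' k ⋖ c' (k + 1)) ->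
        (∀ k, k < n - 1 -> ∀ l, l < n - 1 -> k < l ->
          chi (c' k) (c' (k + 1)) < chi (c' l) (c' (l + 1))) ->
        ∀ m, m < n -> c' m = c m := by
  have hn' : 0 < n := hn
  refine ⟨fun c _ _ hcov k hk => mem_Icc.2 ⟨two_le_chi_of_lt (hcov k hk).lt, chi_le _ _⟩,
    standardChain n hn', standardChain_zero hn', standardChain_sub_one hn',
    fun k hk => standardChain_covBy (by omega), fun k hk => chi_standardChain (by omega),
    fun m _ B hB => mem_standardChain_parts.1 hB, fun c' h0 _ hcov hmono => ?_⟩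
  have hlabel : ∀ k < n - 1, chi (c' k) (c' (k + 1)) = 2 + k := fun k hk =>
    eq_add_of_strictMonoOn_Iio (f := fun k => chi (c' k) (c' (k + 1))) hmono
      (two_le_chi_of_lt (hcov 0 (by omega)).lt) ((chi_le _ _).trans_lt (by omega)) hk
  intro m hm
  induction m with
  | zero => rw [h0, standardChain_zero]
  | succ m ih =>
    have hstep := hcov m (by omega)
    have hchi := hlabel m (by omega)
    rw [ih (by omega)] at hstep hchi
    exact eq_standardChain_succ_of_covBy hm hstep (by omega)
end
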